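/- If 0 < m < r−1, then Q_m·q − k̄_m·p < Q_{r−1}·q − k̄_{r−1}·p. -/

import Mathlib

open Finset

noncomputable section

namespace TTK

/-- `res p x` is the residue `[x]` of `x` modulo `p`. -/
def res (p : ℕ) (x : ℤ) : ℤ := x % (p : ℤ)

/-- The set `Q = {[n·q⁻¹] : n = 0, …, r−1}`. -/
def Qset (p r : ℕ) (qinv : ℤ) : Finset ℤ :=
  (Finset.range r).image fun n : ℕ => res p ((n : ℤ) * qinv)

/-- The set `R = {[−n·q⁻¹] : n = 1, …, q}`. -/
def Rset (p q : ℕ) (qinv : ℤ) : Finset ℤ :=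
  (Finset.Icc 1 q).image fun n : ℕ => res p (-(n : ℤ) * qinv)

/-- `Qi i` is `Q_i`, the `i`-th smallest element of `Q`. -/
def Qi (p r : ℕ) (qinv : ℤ) (i : ℕ) : ℤ :=
  ((Qset p r qinv).sort (· ≤ ·)).getD i 0

/-- `Q' = [r·q⁻¹]`. -/
def Qp' (p r : ℕ) (qinv : ℤ) : ℤ := res p ((r : ℤ) * qinv)

/-- `m` is the unique index with `Q_m < Q'` and (`m = r−1` or `Q' < Q_{m+1}`),
i.e. the number of elements of `Q` below `Q'`, minus one. -/
def mIdx (p r : ℕ) (qinv : ℤ) : ℕ :=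
  ((Qset p r qinv).filter fun x => x < Qp' p r qinv).card - 1

/-- `k_i = #{l ∈ R : Q_{i−1} ≤ l < Q_i}` for `1 ≤ i ≤ r−1`, and
`k_r = #{l ∈ R : Q_{r−1} ≤ l}`. -/
def ki (p q r : ℕ) (qinv : ℤ) (i : ℕ) : ℕ :=
  if i = r then ((Rset p q qinv).filter fun l => Qi p r qinv (r - 1) ≤ l).card
  else ((Rset p q qinv).filter fun l => Qi p r qinv (i - 1) ≤ l ∧ l < Qi p r qinv i).card

/-- `k̄_i = k_1 + ⋯ + k_i` (with `k̄_0 = 0`). -/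
def kbar (p q r : ℕ) (qinv : ℤ) (i : ℕ) : ℕ := ∑ j ∈ Finset.Icc 1 i, ki p q r qinv j

/-- `k' = #{l ∈ R : Q_m ≤ l < Q'}`. -/
def k' (p q r : ℕ) (qinv : ℤ) : ℕ :=
  ((Rset p q qinv).filter fun l =>
      Qi p r qinv (mIdx p r qinv) ≤ l ∧ l < Qp' p r qinv).card

/-- `k̄' = k̄_m + k'`. -/
def kbar' (p q r : ℕ) (qinv : ℤ) : ℕ :=
  kbar p q r qinv (mIdx p r qinv) + k' p q r qinv

/-- `d_i = Q_i − Q_{i−1}` for `1 ≤ i ≤ r−1`, and `d_r = p − Q_{r−1}`. -/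
def di (p r : ℕ) (qinv : ℤ) (i : ℕ) : ℤ :=
  if i = r then (p : ℤ) - Qi p r qinv (r - 1)
  else Qi p r qinv i - Qi p r qinv (i - 1)

end TTK


namespace Aux19

open TTK

variable {p q r : ℕ} {qinv : ℤ}

lemma res_nonneg (hp : 0 < p) (x : ℤ) : 0 ≤ res p x :=
  Int.emod_nonneg _ (by exact_mod_cast hp.ne')

lemma res_lt (hp : 0 < p) (x : ℤ) : res p x < p :=
  Int.emod_lt_of_pos _ (by exact_mod_cast hp)

lemma res_modEq (x : ℤ) : res p x ≡ x [ZMOD p] := Int.emod_emod_of_dvd x dvd_rfl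

/-- If `x ≡ y (mod p)` and `0 ≤ x < p` then `x = res p y`. -/
lemma eq_res (hp : 0 < p) {x y : ℤ} (h : x ≡ y [ZMOD p]) (h0 : 0 ≤ x) (h1 : x < p) :
    x = res p y := by
  have := Int.emod_eq_of_lt h0 h1
  unfold res; rw [← this]; exact h

lemma g_modEq' (x : ℤ) : res p (x * qinv) ≡ x * qinv [ZMOD p] := res_modEq _

lemma g_modEq (n : ℕ) : res p ((n : ℤ) * qinv) ≡ (n : ℤ) * qinv [ZMOD p] := res_modEq _

section

variable (hp : 0 < p) (hinv : (q : ℤ) * qinv ≡ 1 [ZMOD p])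
include hp hinv

/-- Multiplying a congruence `x ≡ n·qinv` by `q` recovers `n`. -/
lemma recover {x : ℤ} {n : ℤ} (h : x ≡ n * qinv [ZMOD p]) : x * q ≡ n [ZMOD p] := by
  calc x * q ≡ n * qinv * q [ZMOD p] := h.mul_right _
    _ = n * (q * qinv) := by ring
    _ ≡ n * 1 [ZMOD p] := hinv.mul_left _
    _ = n := by ring

lemma g_inj {u v : ℕ} (hu : u < p) (hv : v < p)
    (h : res p ((u : ℤ) * qinv) = res p ((v : ℤ) * qinv)) : u = v := by
  have h1 : (u : ℤ) * qinv ≡ (v : ℤ) * qinv [ZMOD p] :=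
    (g_modEq u).symm.trans (h ▸ g_modEq v)
  have h2 : (u : ℤ) ≡ (v : ℤ) [ZMOD p] := by
    have := recover hp hinv (x := (u : ℤ) * qinv) (n := (v : ℤ)) h1
    have hu' := recover hp hinv (x := (u : ℤ) * qinv) (n := (u : ℤ)) (Int.ModEq.refl _)
    exact hu'.symm.trans this
  have h3 : (u : ℤ) % p = (v : ℤ) % p := h2
  rw [Int.emod_eq_of_lt (by positivity) (by exact_mod_cast hu),
      Int.emod_eq_of_lt (by positivity) (by exact_mod_cast hv)] at h3
  exact_mod_cast h3

end

section Qsorted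

variable (hp : 0 < p) (hinv : (q : ℤ) * qinv ≡ 1 [ZMOD p]) (hrp : r < p)
include hp hinv hrp

lemma card_Qset : (Qset p r qinv).card = r := by
  rw [Qset, Finset.card_image_of_injOn, Finset.card_range]
  intro u hu v hv h
  exact g_inj hp hinv (lt_trans (Finset.mem_range.mp hu) hrp)
    (lt_trans (Finset.mem_range.mp hv) hrp) h

lemma length_sortQ : ((Qset p r qinv).sort (· ≤ ·)).length = r := by
  rw [Finset.length_sort, card_Qset hp hinv hrp]

lemma Qi_eq_get {i : ℕ} (hi : i < r) :
    Qi p r qinv i = ((Qset p r qinv).sort (· ≤ ·)).get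
      ⟨i, by rw [length_sortQ hp hinv hrp]; exact hi⟩ := by
  rw [Qi, List.getD_eq_getElem _ _ (by rw [length_sortQ hp hinv hrp]; exact hi)]
  simp

lemma Qi_mem {i : ℕ} (hi : i < r) : Qi p r qinv i ∈ Qset p r qinv := by
  rw [Qi_eq_get hp hinv hrp hi, ← Finset.mem_sort (α := ℤ) (· ≤ ·)]
  exact List.get_mem _ _

lemma Qi_strict {i j : ℕ} (hij : i < j) (hj : j < r) :
    Qi p r qinv i < Qi p r qinv j := by
  rw [Qi_eq_get hp hinv hrp (lt_trans hij hj), Qi_eq_get hp hinv hrp hj]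
  exact ((Qset p r qinv).sortedLT_sort).strictMono_get (by simpa using hij)

lemma Qi_mono {i j : ℕ} (hij : i ≤ j) (hj : j < r) :
    Qi p r qinv i ≤ Qi p r qinv j := by
  rcases eq_or_lt_of_le hij with h | h
  · subst h; exact le_refl _
  · exact le_of_lt (Qi_strict hp hinv hrp h hj)

lemma Qset_exists {x : ℤ} (hx : x ∈ Qset p r qinv) : ∃ i < r, Qi p r qinv i = x := by
  rw [← Finset.mem_sort (α := ℤ) (· ≤ ·), List.mem_iff_get] at hx
  obtain ⟨⟨i, hi⟩, hget⟩ := hx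
  have hi' : i < r := by rwa [length_sortQ hp hinv hrp] at hi
  exact ⟨i, hi', by rw [Qi_eq_get hp hinv hrp hi']; exact hget⟩

lemma Qset_nonneg {x : ℤ} (hx : x ∈ Qset p r qinv) : 0 ≤ x := by
  rw [Qset, Finset.mem_image] at hx
  obtain ⟨n, _, rfl⟩ := hx
  exact res_nonneg hp _

lemma Qset_lt_p {x : ℤ} (hx : x ∈ Qset p r qinv) : x < p := by
  rw [Qset, Finset.mem_image] at hx
  obtain ⟨n, _, rfl⟩ := hx
  exact res_lt hp _

lemma zero_mem_Qset (hr0 : 0 < r) : (0 : ℤ) ∈ Qset p r qinv := by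
  rw [Qset, Finset.mem_image]
  exact ⟨0, Finset.mem_range.mpr hr0, by simp [res]⟩

lemma Qi_zero (hr0 : 0 < r) : Qi p r qinv 0 = 0 := by
  obtain ⟨i, hi, hQ⟩ := Qset_exists hp hinv hrp (zero_mem_Qset hp hinv hrp hr0)
  have h1 : Qi p r qinv 0 ≤ 0 := hQ ▸ Qi_mono hp hinv hrp (Nat.zero_le i) hi
  have h2 : (0:ℤ) ≤ Qi p r qinv 0 := Qset_nonneg hp hinv hrp (Qi_mem hp hinv hrp hr0)
  omega

end Qsorted

section Rcount

lemma Rset_nonneg (hp : 0 < p) {l : ℤ} (hl : l ∈ Rset p q qinv) : 0 ≤ l := by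
  rw [Rset, Finset.mem_image] at hl
  obtain ⟨n, _, rfl⟩ := hl
  exact res_nonneg hp _

variable (hp : 0 < p) (hq0 : 0 < q) (hqp : q < p) (hinv : (q : ℤ) * qinv ≡ 1 [ZMOD p])
include hp hq0 hqp hinv

/-- The two-residue dichotomy: `z%p + (-z)%p ∈ {0, p}`. -/
lemma rho_sigma (z : ℤ) : z % p + (-z) % p = 0 ∨ z % p + (-z) % p = p := by
  have hp' : (0:ℤ) < p := by exact_mod_cast hp
  have h0 : (z % p + (-z) % p) % p = 0 := by
    rw [← Int.add_emod, add_neg_cancel, Int.zero_emod]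
  have b1 : 0 ≤ z % p := Int.emod_nonneg _ hp'.ne'
  have b2 : z % p < p := Int.emod_lt_of_pos _ hp'
  have b3 : 0 ≤ (-z) % p := Int.emod_nonneg _ hp'.ne'
  have b4 : (-z) % p < p := Int.emod_lt_of_pos _ hp'
  rcases lt_or_ge (z % p + (-z) % p) p with h | h
  · left; rwa [Int.emod_eq_of_lt (by omega) h] at h0
  · right
    have h1 : (z % p + (-z) % p) % p = (z % p + (-z) % p - p) % p := by
      conv_lhs => rw [show z % p + (-z) % p = (z % p + (-z) % p - p) + p * 1 by ring]
      rw [Int.add_mul_emod_self_left]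
    rw [h1, Int.emod_eq_of_lt (by omega) (by omega)] at h0
    omega

lemma mem_Rset_iff {y : ℤ} (h0 : 0 ≤ y) (h1 : y < p) :
    y ∈ Rset p q qinv ↔ (p : ℤ) - q ≤ (y * q) % p := by
  have hp' : (0:ℤ) < p := by exact_mod_cast hp
  have hq1 : (q:ℤ) + 1 ≤ p := by exact_mod_cast hqp
  have hd := rho_sigma hp hq0 hqp hinv (y * q)
  have b1 : 0 ≤ (y*q) % p := Int.emod_nonneg _ hp'.ne'
  have b2 : (y*q) % p < p := Int.emod_lt_of_pos _ hp'
  have b3 : 0 ≤ (-(y*q)) % p := Int.emod_nonneg _ hp'.ne'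
  constructor
  · intro hy
    rw [Rset, Finset.mem_image] at hy
    obtain ⟨n, hn, hyn⟩ := hy
    rw [Finset.mem_Icc] at hn
    have hmod : y ≡ (-(n:ℤ)) * qinv [ZMOD p] := by
      rw [← hyn]; exact g_modEq' (-(n:ℤ))
    have h2 : y * q ≡ -(n:ℤ) [ZMOD p] := recover hp hinv hmod
    have h3 : (n : ℤ) ≡ -(y * q) [ZMOD p] := by
      have := h2.neg; simpa using this.symm
    have h4 : (n : ℤ) = (-(y * q)) % p :=
      eq_res hp h3 (by positivity) (by exact_mod_cast lt_of_le_of_lt hn.2 hqp)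
    have hn1 : (1:ℤ) ≤ n := by exact_mod_cast hn.1
    have hn2 : (n:ℤ) ≤ q := by exact_mod_cast hn.2
    rcases hd with h | h
    · linarith
    · linarith
  · intro hge
    have hσ : -(y * q) % p = p - (y*q) % p := by
      rcases hd with h | h
      · linarith
      · linarith
    set n : ℕ := ((-(y*q)) % p).toNat with hn
    have hnval : (n : ℤ) = (-(y*q)) % p := Int.toNat_of_nonneg b3
    have hmem : n ∈ Finset.Icc 1 q := by
      rw [Finset.mem_Icc]
      constructor
      · have : (1:ℤ) ≤ (n:ℤ) := by rw [hnval]; linarith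
        exact_mod_cast this
      · have : (n:ℤ) ≤ q := by rw [hnval]; linarith
        exact_mod_cast this
    rw [Rset, Finset.mem_image]
    refine ⟨n, hmem, (eq_res hp ?_ h0 h1).symm⟩
    -- y ≡ -n * qinv [ZMOD p]
    have h3 : (n : ℤ) ≡ -(y * q) [ZMOD p] := by rw [hnval]; exact res_modEq _
    have h4 : (-(n:ℤ)) * qinv ≡ (y*q) * qinv [ZMOD p] := by
      have := (h3.neg).mul_right qinv
      simpa using this
    have h6 : y * ((q:ℤ) * qinv) ≡ y * 1 [ZMOD p] := hinv.mul_left y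
    calc y = y * 1 := by ring
      _ ≡ y * ((q:ℤ)*qinv) [ZMOD p] := h6.symm
      _ = (y*q) * qinv := by ring
      _ ≡ (-(n:ℤ)) * qinv [ZMOD p] := h4.symm

lemma ediv_succ (y : ℤ) :
    ((y + 1) * q) / p = (y * q) / p + if (p:ℤ) - q ≤ (y*q) % p then 1 else 0 := by
  have hp' : (0:ℤ) < p := by exact_mod_cast hp
  have hq' : (0:ℤ) < q := by exact_mod_cast hq0
  have hqp' : (q:ℤ) < p := by exact_mod_cast hqp
  set ρ := (y*q) % p with hρ
  set D := (y*q) / p with hD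
  have hyq : (p:ℤ) * D + ρ = y * q := Int.mul_ediv_add_emod _ _
  have b1 : 0 ≤ ρ := Int.emod_nonneg _ hp'.ne'
  have b2 : ρ < p := Int.emod_lt_of_pos _ hp'
  have hexp : (y + 1) * q = (ρ + q) + D * p := by linear_combination -hyq
  rw [hexp, Int.add_mul_ediv_right _ _ hp'.ne']
  split_ifs with h
  · have h1 : (ρ + q) = (ρ + q - p) + 1 * p := by ring
    rw [h1, Int.add_mul_ediv_right _ _ hp'.ne',
        Int.ediv_eq_zero_of_lt (by omega) (by omega)]
    ring
  · rw [Int.ediv_eq_zero_of_lt (by omega) (by omega)]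
    ring

lemma count_eq : ∀ y : ℕ, y ≤ p →
    ((((Rset p q qinv).filter (fun l => l < (y:ℤ))).card : ℤ) = ((y:ℤ) * q) / p) := by
  intro y
  induction y with
  | zero =>
    intro _
    have he : (Rset p q qinv).filter (fun l => l < ((0:ℕ):ℤ)) = ∅ := by
      rw [Finset.filter_eq_empty_iff]
      intro l hl
      have := Rset_nonneg hp hl
      push_cast
      omega
    rw [he]
    simp
  | succ y ih =>
    intro hy
    have hy' : y ≤ p := by omega
    have hcast : ((y+1:ℕ):ℤ) = (y:ℤ) + 1 := by push_cast; ring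
    have hL : (((Rset p q qinv).filter (fun l => l < ((y+1:ℕ):ℤ))).card : ℤ) =
        (((Rset p q qinv).filter (fun l => l < (y:ℤ))).card : ℤ) +
          (if (y:ℤ) ∈ Rset p q qinv then 1 else 0) := by
      rw [Finset.card_filter, Finset.card_filter]
      push_cast
      calc (∑ a ∈ Rset p q qinv, if a < (y:ℤ) + 1 then (1:ℤ) else 0)
          = ∑ a ∈ Rset p q qinv,
              ((if a < (y:ℤ) then (1:ℤ) else 0) + (if a = (y:ℤ) then (1:ℤ) else 0)) := by
            refine Finset.sum_congr rfl fun a _ => ?_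
            split_ifs <;> omega
        _ = (∑ a ∈ Rset p q qinv, if a < (y:ℤ) then (1:ℤ) else 0) +
              ∑ a ∈ Rset p q qinv, if a = (y:ℤ) then (1:ℤ) else 0 :=
            Finset.sum_add_distrib
        _ = _ := by rw [Finset.sum_ite_eq' (Rset p q qinv) ((y:ℤ)) (fun _ => (1:ℤ))]
    rw [hL, ih hy', hcast, ediv_succ hp hq0 hqp hinv]
    congr 1
    have hmem := mem_Rset_iff hp hq0 hqp hinv (y := (y:ℤ)) (by positivity)
      (by exact_mod_cast (by omega : y < p))
    simp only [hmem]

end Rcount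

section Main

variable (hp : 0 < p) (hq0 : 0 < q) (hqp : q < p) (hinv : (q : ℤ) * qinv ≡ 1 [ZMOD p])
  (hr1 : 1 < r) (hrp : r < p)
include hp hq0 hqp hinv hr1 hrp

lemma kbar_count : ∀ i, i ≤ r - 1 →
    kbar p q r qinv i = ((Rset p q qinv).filter (fun l => l < Qi p r qinv i)).card := by
  intro i
  induction i with
  | zero =>
    intro _
    have h0 : kbar p q r qinv 0 = 0 := by simp [kbar]
    rw [h0, Qi_zero hp hinv hrp (by omega)]
    symm
    rw [Finset.card_eq_zero, Finset.filter_eq_empty_iff]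
    intro l hl
    have := Rset_nonneg hp hl
    omega
  | succ i ih =>
    intro hi
    have hi' : i ≤ r - 1 := by omega
    have hir : i + 1 < r := by omega
    have hrec : kbar p q r qinv (i+1) = kbar p q r qinv i + ki p q r qinv (i+1) := by
      rw [kbar, kbar, Finset.sum_Icc_succ_top (by omega : 1 ≤ i + 1)]
    have hki : ki p q r qinv (i+1) =
        ((Rset p q qinv).filter
          (fun l => Qi p r qinv i ≤ l ∧ l < Qi p r qinv (i+1))).card := by
      rw [ki, if_neg (by omega : i + 1 ≠ r)]
      simp
    have hAB : Qi p r qinv i ≤ Qi p r qinv (i+1) :=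
      Qi_mono hp hinv hrp (by omega) hir
    rw [hrec, ih hi', hki]
    rw [Finset.card_filter, Finset.card_filter, Finset.card_filter,
      ← Finset.sum_add_distrib]
    refine Finset.sum_congr rfl fun a _ => ?_
    split_ifs <;> omega

lemma kbar_formula (i : ℕ) (hi : i ≤ r - 1) :
    (kbar p q r qinv i : ℤ) = (Qi p r qinv i * q) / p := by
  have hiQ : Qi p r qinv i ∈ Qset p r qinv := Qi_mem hp hinv hrp (by omega)
  have h0 : 0 ≤ Qi p r qinv i := Qset_nonneg hp hinv hrp hiQ
  have h1 : Qi p r qinv i < p := Qset_lt_p hp hinv hrp hiQ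
  have hy : (((Qi p r qinv i).toNat : ℤ)) = Qi p r qinv i := Int.toNat_of_nonneg h0
  have hyp : (Qi p r qinv i).toNat ≤ p := by omega
  rw [kbar_count hp hq0 hqp hinv hr1 hrp i hi]
  have := count_eq hp hq0 hqp hinv (Qi p r qinv i).toNat hyp
  rw [hy] at this
  exact this

lemma Qi_max {x : ℤ} (hx : x ∈ Qset p r qinv) : x ≤ Qi p r qinv (r - 1) := by
  obtain ⟨i, hi, rfl⟩ := Qset_exists hp hinv hrp hx
  exact Qi_mono hp hinv hrp (by omega) (by omega)

lemma Qp'_pos : 0 < Qp' p r qinv := by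
  have h0 : 0 ≤ Qp' p r qinv := res_nonneg hp _
  rcases h0.lt_or_eq with h | h
  · exact h
  · exfalso
    have : res p ((r:ℤ) * qinv) = res p (((0:ℕ):ℤ) * qinv) := by
      have h2 : res p (((0:ℕ):ℤ) * qinv) = 0 := by norm_num [res]
      rw [h2]; exact h.symm
    have := g_inj hp hinv hrp (by omega) this
    omega

lemma Qp'_not_mem : Qp' p r qinv ∉ Qset p r qinv := by
  intro hmem
  rw [Qset, Finset.mem_image] at hmem
  obtain ⟨n, hn, hng⟩ := hmem
  rw [Finset.mem_range] at hn
  have := g_inj hp hinv (by omega) hrp (hng.trans (rfl : Qp' p r qinv = res p ((r:ℤ) * qinv)))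
  omega

lemma card_T (hQm : mIdx p r qinv < r) :
    ((Qset p r qinv).filter fun x => x < Qp' p r qinv).card = mIdx p r qinv + 1 := by
  have hmem : (0:ℤ) ∈ (Qset p r qinv).filter fun x => x < Qp' p r qinv := by
    rw [Finset.mem_filter]
    exact ⟨zero_mem_Qset hp hinv hrp (by omega), Qp'_pos hp hq0 hqp hinv hr1 hrp⟩
  have hpos : 0 < ((Qset p r qinv).filter fun x => x < Qp' p r qinv).card :=
    Finset.card_pos.mpr ⟨0, hmem⟩
  rw [mIdx]
  omega

lemma card_I :
    ((Finset.range r).filter fun i => Qi p r qinv i < Qp' p r qinv).card =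
      ((Qset p r qinv).filter fun x => x < Qp' p r qinv).card := by
  rw [show ((Qset p r qinv).filter fun x => x < Qp' p r qinv) =
      ((Finset.range r).filter fun i => Qi p r qinv i < Qp' p r qinv).image
        (Qi p r qinv) from ?_]
  · rw [Finset.card_image_of_injOn]
    intro i hi j hj hij
    rw [Finset.mem_coe, Finset.mem_filter, Finset.mem_range] at hi hj
    rcases lt_trichotomy i j with h | h | h
    · exact absurd (Qi_strict hp hinv hrp h hj.1) (by rw [hij]; exact lt_irrefl _)
    · exact h
    · exact absurd (Qi_strict hp hinv hrp h hi.1) (by rw [hij]; exact lt_irrefl _)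
  · ext x
    rw [Finset.mem_filter, Finset.mem_image]
    constructor
    · rintro ⟨hx, hlt⟩
      obtain ⟨i, hi, rfl⟩ := Qset_exists hp hinv hrp hx
      exact ⟨i, by rw [Finset.mem_filter, Finset.mem_range]; exact ⟨hi, hlt⟩, rfl⟩
    · rintro ⟨i, hi, rfl⟩
      rw [Finset.mem_filter, Finset.mem_range] at hi
      exact ⟨Qi_mem hp hinv hrp hi.1, hi.2⟩

/-- Every index `i < r` with `Qi i < Q'` satisfies `i ≤ m`. -/
lemma le_m_of_lt {i : ℕ} (hi : i < r) (hm : mIdx p r qinv < r)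
    (hlt : Qi p r qinv i < Qp' p r qinv) : i ≤ mIdx p r qinv := by
  by_contra hc
  push_neg at hc
  have hsub : Finset.range (i+1) ⊆
      (Finset.range r).filter fun j => Qi p r qinv j < Qp' p r qinv := by
    intro j hj
    rw [Finset.mem_range] at hj
    rw [Finset.mem_filter, Finset.mem_range]
    exact ⟨by omega, lt_of_le_of_lt (Qi_mono hp hinv hrp (by omega) hi) hlt⟩
  have hcard := Finset.card_le_card hsub
  rw [Finset.card_range,
    card_I hp hq0 hqp hinv hr1 hrp,
    card_T hp hq0 hqp hinv hr1 hrp hm] at hcard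
  omega

lemma Qm_lt_Qp' (hm : mIdx p r qinv < r) :
    Qi p r qinv (mIdx p r qinv) < Qp' p r qinv := by
  by_contra hc
  push_neg at hc
  have hsub : ((Finset.range r).filter fun i => Qi p r qinv i < Qp' p r qinv) ⊆
      Finset.range (mIdx p r qinv) := by
    intro i hi
    rw [Finset.mem_filter, Finset.mem_range] at hi
    rw [Finset.mem_range]
    by_contra hic
    push_neg at hic
    exact absurd (lt_of_lt_of_le hi.2 hc)
      (not_lt.mpr (Qi_mono hp hinv hrp hic hi.1))
  have hcard := Finset.card_le_card hsub
  rw [Finset.card_range,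
    card_I hp hq0 hqp hinv hr1 hrp,
    card_T hp hq0 hqp hinv hr1 hrp hm] at hcard
  omega

end Main

end Aux19

open TTK
open Aux19

theorem stmt19 (p q r : ℕ) (qinv : ℤ) (hcop : Nat.Coprime p q)
    (hq0 : 0 < q) (hqp : q < p) (hr1 : 1 < r) (hrp : r < p)
    (hqinv : ((q : ℤ) * qinv) % (p : ℤ) = 1)
    (hm0 : 0 < mIdx p r qinv) (hmr : mIdx p r qinv < r - 1) :
    Qi p r qinv (mIdx p r qinv) * (q : ℤ) - (kbar p q r qinv (mIdx p r qinv) : ℤ) * (p : ℤ) <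
      Qi p r qinv (r - 1) * (q : ℤ) - (kbar p q r qinv (r - 1) : ℤ) * (p : ℤ) := by
  have hp : 0 < p := by omega
  have hinv : (q : ℤ) * qinv ≡ 1 [ZMOD p] := by
    show ((q:ℤ) * qinv) % p = 1 % p
    rw [hqinv, Int.emod_eq_of_lt (by norm_num) (by exact_mod_cast (by omega : 1 < p))]
  have hmr' : mIdx p r qinv < r := by omega
  have hm1 : mIdx p r qinv ≤ r - 1 := by omega
  have hr1lt : r - 1 < r := by omega
  rw [kbar_formula hp hq0 hqp hinv hr1 hrp (mIdx p r qinv) hm1,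
      kbar_formula hp hq0 hqp hinv hr1 hrp (r-1) (le_refl _)]
  have e1 : Qi p r qinv (mIdx p r qinv) * q - (Qi p r qinv (mIdx p r qinv) * q / p) * p
      = (Qi p r qinv (mIdx p r qinv) * q) % p := by
    rw [Int.emod_def]; ring
  have e2 : Qi p r qinv (r-1) * q - (Qi p r qinv (r-1) * q / p) * p
      = (Qi p r qinv (r-1) * q) % p := by
    rw [Int.emod_def]; ring
  rw [e1, e2]
  -- extract the indices of `Q_m` and `Q_{r-1}`
  obtain ⟨nm, hnmr, hnm⟩ : ∃ n < r, res p ((n:ℤ)*qinv) = Qi p r qinv (mIdx p r qinv) := by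
    have := Qi_mem hp hinv hrp hmr'
    rw [Qset, Finset.mem_image] at this
    obtain ⟨n, hn, hng⟩ := this
    exact ⟨n, Finset.mem_range.mp hn, hng⟩
  obtain ⟨nd, hndr, hnd⟩ : ∃ n < r, res p ((n:ℤ)*qinv) = Qi p r qinv (r-1) := by
    have := Qi_mem hp hinv hrp hr1lt
    rw [Qset, Finset.mem_image] at this
    obtain ⟨n, hn, hng⟩ := this
    exact ⟨n, Finset.mem_range.mp hn, hng⟩
  have hmodm : Qi p r qinv (mIdx p r qinv) ≡ (nm:ℤ) * qinv [ZMOD p] := by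
    rw [← hnm]; exact g_modEq nm
  have hmodd : Qi p r qinv (r-1) ≡ (nd:ℤ) * qinv [ZMOD p] := by
    rw [← hnd]; exact g_modEq nd
  have vm : ((nm:ℤ)) = res p (Qi p r qinv (mIdx p r qinv) * q) :=
    eq_res hp ((recover hp hinv hmodm).symm) (by positivity)
      (by exact_mod_cast lt_trans hnmr hrp)
  have vd : ((nd:ℤ)) = res p (Qi p r qinv (r-1) * q) :=
    eq_res hp ((recover hp hinv hmodd).symm) (by positivity)
      (by exact_mod_cast lt_trans hndr hrp)
  have vm' : (Qi p r qinv (mIdx p r qinv) * q) % p = (nm:ℤ) := by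
    rw [show (Qi p r qinv (mIdx p r qinv) * q) % (p:ℤ)
      = res p (Qi p r qinv (mIdx p r qinv) * q) from rfl, ← vm]
  have vd' : (Qi p r qinv (r-1) * q) % p = (nd:ℤ) := by
    rw [show (Qi p r qinv (r-1) * q) % (p:ℤ) = res p (Qi p r qinv (r-1) * q) from rfl, ← vd]
  rw [vm', vd']
  -- key geometric facts
  have hQm_lt : Qi p r qinv (mIdx p r qinv) < Qp' p r qinv :=
    Qm_lt_Qp' hp hq0 hqp hinv hr1 hrp hmr'
  have hQd_gt : Qp' p r qinv < Qi p r qinv (r-1) := by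
    have hle : Qp' p r qinv ≤ Qi p r qinv (r-1) := by
      by_contra hc
      push_neg at hc
      have := le_m_of_lt hp hq0 hqp hinv hr1 hrp hr1lt hmr' hc
      omega
    rcases hle.lt_or_eq with h | h
    · exact h
    · exact absurd (h ▸ Qi_mem hp hinv hrp hr1lt)
        (Qp'_not_mem hp hq0 hqp hinv hr1 hrp)
  have hmax : ∀ x ∈ Qset p r qinv, x < Qp' p r qinv →
      x ≤ Qi p r qinv (mIdx p r qinv) := by
    intro x hx hlt
    obtain ⟨i, hi, rfl⟩ := Qset_exists hp hinv hrp hx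
    exact Qi_mono hp hinv hrp (le_m_of_lt hp hq0 hqp hinv hr1 hrp hi hmr' hlt) hmr'
  have hQd_lt_p : Qi p r qinv (r-1) < p :=
    Qset_lt_p hp hinv hrp (Qi_mem hp hinv hrp hr1lt)
  have hQm_nonneg : 0 ≤ Qi p r qinv (mIdx p r qinv) :=
    Qset_nonneg hp hinv hrp (Qi_mem hp hinv hrp hmr')
  have hQp'_nonneg : 0 ≤ Qp' p r qinv := res_nonneg hp _
  have hpmod : (p:ℤ) ≡ 0 [ZMOD p] := by
    show (p:ℤ) % p = 0 % p
    rw [Int.emod_self, Int.zero_emod]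
  -- the core combinatorial argument
  have hcore : nm < nd := by
    by_contra hcon
    push_neg at hcon
    have hQQ : Qi p r qinv (mIdx p r qinv) < Qi p r qinv (r-1) :=
      lt_trans hQm_lt hQd_gt
    have hne : nd ≠ nm := by
      intro h
      rw [h, hnm] at hnd
      omega
    have hndm : nd < nm := by omega
    set n1 := nm - nd with hn1def
    have hn1a : 1 ≤ n1 := by omega
    have hn1b : n1 < r := by omega
    have hc1 : ((n1:ℤ)) = (nm:ℤ) - nd := by omega
    have hx : Qi p r qinv (mIdx p r qinv) - Qi p r qinv (r-1) + p
        = res p ((n1:ℤ) * qinv) := by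
      apply eq_res hp ?_ (by linarith) (by linarith)
      calc Qi p r qinv (mIdx p r qinv) - Qi p r qinv (r-1) + (p:ℤ)
          ≡ (nm:ℤ) * qinv - (nd:ℤ) * qinv + 0 [ZMOD p] := (hmodm.sub hmodd).add hpmod
        _ = (n1:ℤ) * qinv := by rw [hc1]; ring
    have hxQ : Qi p r qinv (mIdx p r qinv) - Qi p r qinv (r-1) + (p:ℤ) ∈ Qset p r qinv := by
      rw [Qset, Finset.mem_image]
      exact ⟨n1, Finset.mem_range.mpr hn1b, hx.symm⟩
    rcases lt_or_ge (Qi p r qinv (mIdx p r qinv) - Qi p r qinv (r-1) + (p:ℤ))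
        (Qp' p r qinv) with hlt | hge
    · have := hmax _ hxQ hlt
      linarith
    · have hne2 : Qi p r qinv (mIdx p r qinv) - Qi p r qinv (r-1) + (p:ℤ)
          ≠ Qp' p r qinv := by
        intro h
        have h2 : res p ((n1:ℤ)*qinv) = res p ((r:ℤ)*qinv) := by rw [← hx]; exact h
        have := g_inj hp hinv (by omega) hrp h2
        omega
      have hgt : Qp' p r qinv
          < Qi p r qinv (mIdx p r qinv) - Qi p r qinv (r-1) + (p:ℤ) :=
        lt_of_le_of_ne hge (Ne.symm hne2)
      set k := r - n1 with hkdef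
      have hk1 : k < r := by omega
      have hck : ((k:ℤ)) = (r:ℤ) - n1 := by omega
      have hxmod : Qi p r qinv (mIdx p r qinv) - Qi p r qinv (r-1) + (p:ℤ)
          ≡ (n1:ℤ) * qinv [ZMOD p] := by
        rw [hx]; exact g_modEq n1
      have hQp'mod : Qp' p r qinv ≡ (r:ℤ) * qinv [ZMOD p] := g_modEq r
      have hxp : Qi p r qinv (mIdx p r qinv) - Qi p r qinv (r-1) + (p:ℤ) < p := by
        linarith
      have hv : Qp' p r qinv
          - (Qi p r qinv (mIdx p r qinv) - Qi p r qinv (r-1) + (p:ℤ)) + p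
          = res p ((k:ℤ) * qinv) := by
        apply eq_res hp ?_ (by linarith) (by linarith)
        calc Qp' p r qinv
            - (Qi p r qinv (mIdx p r qinv) - Qi p r qinv (r-1) + (p:ℤ)) + p
            ≡ (r:ℤ) * qinv - (n1:ℤ) * qinv + 0 [ZMOD p] :=
              (hQp'mod.sub hxmod).add hpmod
          _ = (k:ℤ) * qinv := by rw [hck]; ring
      have hkQ : res p ((k:ℤ)*qinv) ∈ Qset p r qinv := by
        rw [Qset, Finset.mem_image]
        exact ⟨k, Finset.mem_range.mpr hk1, rfl⟩
      have hle2 := Qi_max hp hq0 hqp hinv hr1 hrp hkQ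
      rw [← hv] at hle2
      linarith
  exact_mod_cast hcore
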